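/- arXiv:1401.2659 — 5 statements merged into one kernel-verified Lean document; each statement's English description precedes it below -/
import Mathlib

section
/- For every n, p(n) is congruent modulo 2 to the number of partitions of n into distinct odd parts. -/
/-!
Work with power series over a topological ring `R` of characteristic 2. The generating function
`P = ∑ p(n) Xⁿ` is inverse to `Q = ∏ₖ (1 - Xᵏ)`, and the generating function of partitions into
distinct odd parts is `O = ∏_{k odd} (1 + Xᵏ) = ∏_{k odd} (1 - Xᵏ)`. By Frobenius the factors of `Q`
with `k` even multiply to `Q²`, so `Q = O Q²`; since `Q` is invertible this gives `O = P`.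
Comparing coefficients over `ZMod 2` gives the congruence.
-/

open Finset PowerSeries PowerSeries.WithPiTopology

theorem PowerSeries.WithPiTopology.hasProd_ite_dvd_one_sub_X_pow (R : Type*) [CommRing R]
    [TopologicalSpace R] [IsTopologicalRing R] (p : ℕ) [Fact p.Prime] [CharP R p] :
    HasProd (fun i ↦ if p ∣ i + 1 then 1 - X ^ (i + 1) else 1)
      ((∏' i, (1 - X ^ (i + 1)) : R⟦X⟧) ^ p) := by
  have : CharP R⟦X⟧ p := charP_of_injective_ringHom C_injective p
  have hp := (Fact.out : p.Prime).pos
  have hg : Function.Injective fun i ↦ p * i + (p - 1) :=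
    (add_left_injective _).comp (mul_right_injective₀ hp.ne')
  rw [← hg.hasProd_iff]
  · convert (multipliable_one_sub_X_pow R).hasProd.pow p with i
    have : p * i + (p - 1) + 1 = (i + 1) * p := by grind
    simp [this, sub_pow_char, ← pow_mul]
  · intro j hj
    rw [if_neg]
    rintro ⟨_ | i, hi⟩
    · omega
    · exact hj ⟨i, by dsimp only; rw [mul_add_one] at hi; omega⟩

namespace Nat.Partition

section Semiring

variable (R : Type*) [CommSemiring R] [TopologicalSpace R] [T2Space R]

theorem hasProd_powerSeriesMk_card_oddDistincts :
    HasProd (fun i ↦ if Even (i + 1) then 1 else 1 + (X : R⟦X⟧) ^ (i + 1))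
      (PowerSeries.mk fun n ↦ (#(oddDistincts n) : R)) := by
  convert! hasProd_genFun (fun i c ↦ if ¬ Even i ∧ c = 1 then (1 : R) else 0) using 1
  · ext1 i
    rw [tsum_eq_single 0 (fun j hj ↦ by simp [hj])]
    split_ifs <;> simp_all
  · simp_rw [genFun, oddDistincts, odds, distincts, restricted, ← filter_and, card_filter,
      Finsupp.prod, prod_boole]
    simp [Multiset.nodup_iff_count_eq_one, forall_and]

theorem hasProd_powerSeriesMk_card [IsTopologicalSemiring R] :
    HasProd (fun i ↦ ∑' j : ℕ, (X : R⟦X⟧) ^ ((i + 1) * j))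
      (PowerSeries.mk fun n ↦ (Fintype.card n.Partition : R)) := by
  simpa [restricted] using hasProd_powerSeriesMk_card_restricted R fun _ ↦ True

end Semiring

section Ring

variable (R : Type*) [CommRing R] [TopologicalSpace R] [T2Space R] [IsTopologicalRing R]

theorem powerSeriesMk_card_mul_tprod_one_sub_X_pow :
    (PowerSeries.mk fun n ↦ (Fintype.card n.Partition : R)) * ∏' i, (1 - X ^ (i + 1)) = 1 := by
  refine ((hasProd_powerSeriesMk_card R).mul (multipliable_one_sub_X_pow R).hasProd).unique ?_
  convert hasProd_one with i
  simp_rw [pow_mul]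
  exact tsum_pow_mul_one_sub_of_constantCoeff_eq_zero (by simp)

theorem powerSeriesMk_card_oddDistincts_eq_powerSeriesMk_card [CharP R 2] :
    (PowerSeries.mk fun n ↦ (#(oddDistincts n) : R)) =
      PowerSeries.mk fun n ↦ (Fintype.card n.Partition : R) := by
  have : CharP R⟦X⟧ 2 := charP_of_injective_ringHom C_injective 2
  set O := PowerSeries.mk fun n ↦ (#(oddDistincts n) : R)
  set P := PowerSeries.mk fun n ↦ (Fintype.card n.Partition : R)
  set Q := ∏' i, (1 - X ^ (i + 1) : R⟦X⟧)
  have hPQ : P * Q = 1 := powerSeriesMk_card_mul_tprod_one_sub_X_pow R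
  have hQ : Q = O * Q ^ 2 := by
    refine (multipliable_one_sub_X_pow R).hasProd.unique ?_
    convert! (hasProd_powerSeriesMk_card_oddDistincts R).mul
      (hasProd_ite_dvd_one_sub_X_pow R 2) using 1
    ext1 i
    split_ifs <;> simp_all [even_iff_two_dvd, CharTwo.sub_eq_add]
  -- O = O (PQ)² = (O Q²) P² = Q P² = P
  linear_combination (P - O * (P * Q + 1)) * hPQ - P ^ 2 * hQ

end Ring

end Nat.Partition

theorem partition_card_modEq_oddDistincts_card (n : ℕ) :
    Fintype.card (Nat.Partition n) ≡ (Nat.Partition.oddDistincts n).card [MOD 2] := by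
  have h := congrArg (coeff n)
    (Nat.Partition.powerSeriesMk_card_oddDistincts_eq_powerSeriesMk_card (ZMod 2))
  simp only [coeff_mk] at h
  exact (ZMod.natCast_eq_natCast_iff _ _ 2).1 h.symm
end

section
/- Let a ≥ b ≥ 1 and let D_{a,b}(n) denote the set of partitions of n into distinct parts each congruent to b modulo a. For j ≥ 1, let D^j_{a,b}(n) be the set of partitions λ in D_{a,b}(n) with at least j parts satisfying λ_1 − λ_2 = … = λ_{j−1} − λ_j = a (with D^1_{a,b}(n) = D_{a,b}(n)). Then the map subtracting a from each of the first j parts gives a bijection from D^j_{a,b}(n) \ D^{j+1}_{a,b}(n) to D^j_{a,b}(n − aj), provided D^{j+1}_{a,b}(n) is nonempty. -/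
/-!
Subtracting `a` from the first `j` parts keeps the gaps `λ_i - λ_{i+1} = a` among them, and keeps
the new `j`-th part above `λ_{j+1}`: the parts are congruent mod `a`, so outside `D^{j+1}` the gap
`λ_j - λ_{j+1}` is a positive multiple of `a` other than `a`. The new parts remain `≥ b` because
`λ_j ≥ a + b`. Otherwise `λ_j = b` (the only admissible value below `a + b`), so `λ` is the
staircase `b + (j - 1) a, …, b + a, b`, whose size is below that of every partition in
`D^{j+1}_{a,b}`; this contradicts `D^{j+1}_{a,b}(n) ≠ ∅`. Adding `a` back to the first `j` parts
is the inverse, and it never lands in `D^{j+1}` since it makes the `j`-th gap exceed `a`.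
-/

/-- `Dab a b n`: partitions of `n` into distinct parts each congruent to `b` mod `a`. -/
def Dab (a b n : ℕ) : Finset (Nat.Partition n) :=
  Finset.univ.filter (fun P => P.parts.Nodup ∧ ∀ x ∈ P.parts, x % a = b % a)

/-- The parts of a partition listed in nonincreasing order. -/
def partsDesc {n : ℕ} (P : Nat.Partition n) : List ℕ :=
  (P.parts.sort (· ≤ ·)).reverse

open Classical in
/-- `Dj a b j n`: partitions in `Dab a b n` with at least `j` parts whose first `j - 1`
consecutive gaps `λ_1 - λ_2, …, λ_{j-1} - λ_j` all equal `a`. -/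
noncomputable def Dj (a b j n : ℕ) : Finset (Nat.Partition n) :=
  (Dab a b n).filter (fun P => j ≤ Multiset.card P.parts ∧
    ∀ i, i + 1 < j → (partsDesc P).getD i 0 = (partsDesc P).getD (i + 1) 0 + a)

namespace List

variable {α : Type*}

def mapFirst (f : α → α) (j : ℕ) (L : List α) : List α :=
  L.mapIdx fun i x => if i < j then f x else x

variable {f g : α → α} {j : ℕ} {L : List α}

@[simp]
theorem length_mapFirst : (L.mapFirst f j).length = L.length :=
  length_mapIdx

@[simp]
theorem getElem_mapFirst {i : ℕ} (hi : i < (L.mapFirst f j).length) :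
    (L.mapFirst f j)[i] =
      if i < j then f (L[i]'(by simpa using hi)) else L[i]'(by simpa using hi) :=
  getElem_mapIdx

theorem getD_mapFirst {i : ℕ} (d : α) (hi : i < L.length) :
    (L.mapFirst f j).getD i d = if i < j then f (L.getD i d) else L.getD i d := by
  rw [getD_eq_getElem _ _ (by simpa using hi), getElem_mapFirst, getD_eq_getElem _ _ hi]

@[simp]
theorem mapFirst_zero : L.mapFirst f 0 = L :=
  ext_getElem (by simp) (by simp)

@[simp]
theorem mapFirst_cons_succ (x : α) : (x :: L).mapFirst f (j + 1) = f x :: L.mapFirst f j := by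
  simp [mapFirst, mapIdx_cons]

theorem mapFirst_mapFirst_of_forall
    (h : ∀ i (hi : i < L.length), i < j → f (g L[i]) = L[i]) :
    (L.mapFirst g j).mapFirst f j = L :=
  ext_getElem (by simp) fun i _ hi => by
    simp only [getElem_mapFirst]
    split_ifs with hij
    · exact h i hi hij
    · rfl

theorem getD_mem (d : α) {i : ℕ} (hi : i < L.length) : L.getD i d ∈ L := by
  rw [getD_eq_getElem _ _ hi]
  exact getElem_mem hi

theorem forall_mem_iff_getD {p : α → Prop} (d : α) :
    (∀ x ∈ L, p x) ↔ ∀ i < L.length, p (L.getD i d) := by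
  rw [forall_mem_iff_getElem]
  exact forall₂_congr fun i hi => by rw [getD_eq_getElem _ _ hi]

theorem sortedGT_iff_getD_succ_lt [Preorder α] (d : α) :
    L.SortedGT ↔ ∀ i, i + 1 < L.length → L.getD (i + 1) d < L.getD i d := by
  rw [sortedGT_iff_isChain, isChain_iff_getElem]
  refine forall_congr' fun i => ⟨fun h hi => ?_, fun h hi => ?_⟩
  · rw [getD_eq_getElem _ _ hi, getD_eq_getElem _ _ (by omega)]
    exact h hi
  · have := h hi
    rwa [getD_eq_getElem _ _ hi, getD_eq_getElem _ _ (by omega)] at this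

section Nat

variable {j : ℕ} {L : List ℕ}

theorem sum_take_eq_sum_range_getD (hj : j ≤ L.length) :
    (L.take j).sum = ∑ i ∈ Finset.range j, L.getD i 0 := by
  induction j with
  | zero => simp
  | succ j ih =>
    rw [sum_take_succ _ _ (by omega), ih (by omega), Finset.sum_range_succ,
      getD_eq_getElem _ _ (by omega)]

theorem sum_mapFirst_add (a : ℕ) (hj : j ≤ L.length) :
    (L.mapFirst (· + a) j).sum = L.sum + a * j := by
  induction L generalizing j with
  | nil => simp_all
  | cons x L ih =>
    cases j with
    | zero => simp
    | succ j =>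
      rw [mapFirst_cons_succ, sum_cons, sum_cons, ih (by simpa using hj)]
      ring

theorem sum_mapFirst_sub_add {a : ℕ} (hj : j ≤ L.length)
    (ha : ∀ i (hi : i < L.length), i < j → a ≤ L[i]) :
    (L.mapFirst (· - a) j).sum + a * j = L.sum := by
  conv_rhs => rw [← mapFirst_mapFirst_of_forall (f := (· + a)) (g := (· - a)) (j := j)
    fun i hi hij => Nat.sub_add_cancel (ha i hi hij)]
  rw [sum_mapFirst_add a (by simpa using hj)]

end Nat

end List

section partsDesc

variable {n : ℕ} {P : Nat.Partition n}

@[simp]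
theorem coe_partsDesc : ((partsDesc P : List ℕ) : Multiset ℕ) = P.parts := by
  simp [partsDesc]

@[simp]
theorem mem_partsDesc {x : ℕ} : x ∈ partsDesc P ↔ x ∈ P.parts := by
  simp [partsDesc]

@[simp]
theorem length_partsDesc : (partsDesc P).length = Multiset.card P.parts := by
  simp [partsDesc]

theorem sum_partsDesc : (partsDesc P).sum = n := by
  rw [← Multiset.sum_coe, coe_partsDesc, P.parts_sum]

theorem partsDesc_injective : Function.Injective (partsDesc (n := n)) := fun P Q h =>
  Nat.Partition.ext (by rw [← coe_partsDesc, h, coe_partsDesc])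

theorem sortedGT_partsDesc_iff : (partsDesc P).SortedGT ↔ P.parts.Nodup := by
  rw [partsDesc, List.sortedGT_reverse, List.sortedLT_iff_nodup_and_sortedLE,
    ← Multiset.coe_nodup, Multiset.sort_eq]
  exact and_iff_left (Multiset.pairwise_sort _ _).sortedLE

theorem partsDesc_ofSums {L : List ℕ} (hL : L.SortedGT) (hpos : ∀ x ∈ L, 0 < x)
    (hn : (L : Multiset ℕ).sum = n) : partsDesc (.ofSums n L hn) = L := by
  have hparts : (Nat.Partition.ofSums n L hn).parts = L := by
    rw [Nat.Partition.ofSums_parts, Multiset.filter_eq_self]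
    exact fun x hx => (hpos x hx).ne'
  refine (sortedGT_partsDesc_iff.2 ?_).eq_of_mem_iff hL fun x => ?_
  · rw [hparts, Multiset.coe_nodup]
    exact hL.nodup
  · rw [mem_partsDesc, hparts, Multiset.mem_coe]

end partsDesc

namespace Nat.ModEq

variable {a b x : ℕ}

theorem le_of_pos (h : x ≡ b [MOD a]) (hx : 0 < x) (hab : b ≤ a) : b ≤ x := by
  by_contra! hxb
  have := h.add_le_of_lt hxb
  omega

theorem eq_of_lt_add (h : x ≡ b [MOD a]) (hx : 0 < x) (hab : b ≤ a) (hlt : x < a + b) :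
    x = b :=
  le_antisymm (h.le_of_lt_add (by omega)) (h.le_of_pos hx hab)

end Nat.ModEq

structure IsDjParts (a b j : ℕ) (L : List ℕ) : Prop where
  sortedGT : L.SortedGT
  pos : ∀ x ∈ L, 0 < x
  modEq : ∀ x ∈ L, x ≡ b [MOD a]
  le_length : j ≤ L.length
  gap_eq : ∀ i, i + 1 < j → L.getD i 0 = L.getD (i + 1) 0 + a

theorem mem_Dj_iff {a b j n : ℕ} {P : Nat.Partition n} :
    P ∈ Dj a b j n ↔ IsDjParts a b j (partsDesc P) := by
  simp only [Dj, Dab, Finset.mem_filter, Finset.mem_univ, true_and]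
  constructor
  · rintro ⟨⟨hnd, hmod⟩, hlen, hgap⟩
    exact ⟨sortedGT_partsDesc_iff.2 hnd, fun x hx => P.parts_pos (mem_partsDesc.1 hx),
      fun x hx => hmod x (mem_partsDesc.1 hx), by simpa using hlen, hgap⟩
  · rintro ⟨hs, -, hmod, hlen, hgap⟩
    exact ⟨⟨sortedGT_partsDesc_iff.1 hs, fun x hx => hmod x (mem_partsDesc.2 hx)⟩,
      by simpa using hlen, hgap⟩

namespace IsDjParts

open Finset

variable {a b j : ℕ} {L M : List ℕ}

theorem getD_succ_lt (h : IsDjParts a b j L) {i : ℕ} (hi : i + 1 < L.length) :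
    L.getD (i + 1) 0 < L.getD i 0 :=
  (List.sortedGT_iff_getD_succ_lt 0).1 h.sortedGT i hi

theorem le_getD (h : IsDjParts a b j L) (hab : b ≤ a) {i : ℕ} (hi : i < L.length) :
    b ≤ L.getD i 0 :=
  (h.modEq _ (L.getD_mem 0 hi)).le_of_pos (h.pos _ (L.getD_mem 0 hi)) hab

theorem getD_eq_getD_add_mul (h : IsDjParts a b j L) :
    ∀ d i, i + d < j → L.getD i 0 = L.getD (i + d) 0 + a * d
  | 0, i, _ => by simp
  | d + 1, i, hi => by
    rw [h.gap_eq i (by omega), h.getD_eq_getD_add_mul d (i + 1) (by omega),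
      show i + 1 + d = i + (d + 1) by omega]
    ring

theorem getD_eq_getD_pred_add_mul (h : IsDjParts a b j L) {i : ℕ} (hi : i < j) :
    L.getD i 0 = L.getD (j - 1) 0 + a * (j - 1 - i) := by
  rw [h.getD_eq_getD_add_mul (j - 1 - i) i (by omega), show i + (j - 1 - i) = j - 1 by omega]

theorem sum_take (h : IsDjParts a b j L) :
    (L.take j).sum = ∑ k ∈ range j, (L.getD (j - 1) 0 + a * k) := by
  rw [List.sum_take_eq_sum_range_getD h.le_length,
    ← sum_range_reflect (fun k => L.getD (j - 1) 0 + a * k) j]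
  exact sum_congr rfl fun i hi => h.getD_eq_getD_pred_add_mul (mem_range.1 hi)

theorem sum_range_le_sum (h : IsDjParts a b j L) (hab : b ≤ a) :
    ∑ k ∈ range j, (b + a * k) ≤ L.sum :=
  calc ∑ k ∈ range j, (b + a * k)
      ≤ ∑ k ∈ range j, (L.getD (j - 1) 0 + a * k) := by
        refine sum_le_sum fun k hk => ?_
        have := h.le_getD hab (i := j - 1) (by have := mem_range.1 hk; have := h.le_length; omega)
        omega
    _ = (L.take j).sum := h.sum_take.symm
    _ ≤ L.sum := (L.take_sublist j).sum_le_sum fun _ _ => Nat.zero_le _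

theorem add_le_getD_pred (hL : IsDjParts a b j L) (hM : IsDjParts a b (j + 1) M)
    (hb : 1 ≤ b) (hab : b ≤ a) (hj : 1 ≤ j) (hsum : L.sum = M.sum) :
    a + b ≤ L.getD (j - 1) 0 := by
  by_contra! hlt
  have hj' : j - 1 < L.length := by have := hL.le_length; omega
  have hlast : L.getD (j - 1) 0 = b :=
    (hL.modEq _ (L.getD_mem 0 hj')).eq_of_lt_add (hL.pos _ (L.getD_mem 0 hj')) hab hlt
  have hlen : L.length = j := by
    by_contra hne
    have := hL.getD_succ_lt (i := j - 1) (by have := hL.le_length; omega)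
    have := hL.le_getD hab (i := j - 1 + 1) (by have := hL.le_length; omega)
    omega
  have : L.sum < M.sum :=
    calc L.sum = (L.take j).sum := by rw [List.take_of_length_le hlen.le]
      _ = ∑ k ∈ range j, (b + a * k) := by rw [hL.sum_take, hlast]
      _ < ∑ k ∈ range (j + 1), (b + a * k) := by rw [sum_range_succ]; omega
      _ ≤ M.sum := hM.sum_range_le_sum hab
  omega

theorem add_le_getD_of_lt (h : IsDjParts a b j L) (hbot : a + b ≤ L.getD (j - 1) 0) {i : ℕ}
    (hi : i < j) : a + b ≤ L.getD i 0 := by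
  rw [h.getD_eq_getD_pred_add_mul hi]
  omega

theorem le_getElem_of_lt (h : IsDjParts a b j L) (hbot : a + b ≤ L.getD (j - 1) 0) {i : ℕ}
    (hi : i < L.length) (hij : i < j) : a ≤ L[i] := by
  have := h.add_le_getD_of_lt hbot hij
  rw [List.getD_eq_getElem _ _ hi] at this
  omega

theorem sum_mapFirst_sub_add (h : IsDjParts a b j L) (hbot : a + b ≤ L.getD (j - 1) 0) :
    (L.mapFirst (· - a) j).sum + a * j = L.sum :=
  List.sum_mapFirst_sub_add h.le_length fun _ hi hij => h.le_getElem_of_lt hbot hi hij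

theorem mapFirst_add (h : IsDjParts a b j L) : IsDjParts a b j (L.mapFirst (· + a) j) where
  sortedGT := (List.sortedGT_iff_getD_succ_lt 0).2 fun i hi => by
    rw [List.length_mapFirst] at hi
    have := h.getD_succ_lt hi
    rw [List.getD_mapFirst 0 hi, List.getD_mapFirst 0 (by omega)]
    split_ifs <;> omega
  pos := (List.forall_mem_iff_getD 0).2 fun i hi => by
    rw [List.length_mapFirst] at hi
    have := h.pos _ (L.getD_mem 0 hi)
    rw [List.getD_mapFirst 0 hi]
    split_ifs <;> omega
  modEq := (List.forall_mem_iff_getD 0).2 fun i hi => by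
    rw [List.length_mapFirst] at hi
    rw [List.getD_mapFirst 0 hi]
    split_ifs
    · exact Nat.add_modEq_right.trans (h.modEq _ (L.getD_mem 0 hi))
    · exact h.modEq _ (L.getD_mem 0 hi)
  le_length := by simpa using h.le_length
  gap_eq i hi := by
    have := h.gap_eq i hi
    have := h.le_length
    rw [List.getD_mapFirst 0 (by omega), List.getD_mapFirst 0 (by omega), if_pos (by omega),
      if_pos hi]
    omega

theorem not_isDjParts_succ_mapFirst_add (h : IsDjParts a b j L) (hj : 1 ≤ j) :
    ¬ IsDjParts a b (j + 1) (L.mapFirst (· + a) j) := by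
  obtain ⟨k, rfl⟩ : ∃ k, j = k + 1 := ⟨j - 1, by omega⟩
  intro h'
  have hlen := h'.le_length
  rw [List.length_mapFirst] at hlen
  have hgap := h'.gap_eq k (by omega)
  rw [List.getD_mapFirst 0 (by omega), List.getD_mapFirst 0 hlen, if_pos (by omega),
    if_neg (by omega)] at hgap
  have := h.getD_succ_lt hlen
  omega

theorem mapFirst_sub (h : IsDjParts a b j L) (hb : 1 ≤ b) (hbot : a + b ≤ L.getD (j - 1) 0)
    (hnext : ¬ IsDjParts a b (j + 1) L) : IsDjParts a b j (L.mapFirst (· - a) j) := by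
  have hlow := fun i => h.add_le_getD_of_lt hbot (i := i)
  have hstep : ∀ i, i + 1 = j → i + 1 < L.length → L.getD (i + 1) 0 + a < L.getD i 0 := by
    intro i hij hi
    have hmod : L.getD (i + 1) 0 ≡ L.getD i 0 [MOD a] :=
      (h.modEq _ (L.getD_mem 0 hi)).trans (h.modEq _ (L.getD_mem 0 (by omega))).symm
    refine (hmod.add_le_of_lt (h.getD_succ_lt hi)).lt_of_ne fun heq => hnext ?_
    refine ⟨h.sortedGT, h.pos, h.modEq, by omega, fun k hk => ?_⟩
    rcases Nat.lt_or_ge (k + 1) j with hkj | hkj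
    · exact h.gap_eq k hkj
    · rw [show k = i by omega, heq]
  refine ⟨(List.sortedGT_iff_getD_succ_lt 0).2 fun i hi => ?_,
    (List.forall_mem_iff_getD 0).2 fun i hi => ?_, (List.forall_mem_iff_getD 0).2 fun i hi => ?_,
    by simpa using h.le_length, fun i hi => ?_⟩
  · rw [List.length_mapFirst] at hi
    have := h.getD_succ_lt hi
    rw [List.getD_mapFirst 0 hi, List.getD_mapFirst 0 (by omega)]
    split_ifs with h₁ h₂
    · have := hlow (i + 1) h₁
      omega
    · omega
    · have := hstep i (by omega) hi
      omega
    · exact this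
  · rw [List.length_mapFirst] at hi
    have := h.pos _ (L.getD_mem 0 hi)
    rw [List.getD_mapFirst 0 hi]
    split_ifs with hij
    · have := hlow i hij
      omega
    · exact this
  · rw [List.length_mapFirst] at hi
    have hmod := h.modEq _ (L.getD_mem 0 hi)
    rw [List.getD_mapFirst 0 hi]
    split_ifs with hij
    · refine Nat.add_modEq_right.symm.trans ?_
      rwa [Nat.sub_add_cancel (by have := hlow i hij; omega)]
    · exact hmod
  · have := h.gap_eq i hi
    have := hlow (i + 1) hi
    have := h.le_length
    rw [List.getD_mapFirst 0 (by omega), List.getD_mapFirst 0 (by omega), if_pos (by omega),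
      if_pos hi]
    omega

end IsDjParts

theorem mem_Dj_ofSums_iff {a b j m : ℕ} {L : List ℕ} (hL : L.SortedGT)
    (hpos : ∀ x ∈ L, 0 < x) (hm : (L : Multiset ℕ).sum = m) :
    Nat.Partition.ofSums m L hm ∈ Dj a b j m ↔ IsDjParts a b j L := by
  rw [mem_Dj_iff, partsDesc_ofSums hL hpos]

section LowerFirst

variable {a b j n : ℕ}

theorem mul_le_of_Dj_succ_nonempty (hab : b ≤ a) (hne : (Dj a b (j + 1) n).Nonempty) :
    a * j ≤ n := by
  obtain ⟨Q, hQ⟩ := hne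
  have := (mem_Dj_iff.1 hQ).sum_range_le_sum hab
  rw [sum_partsDesc, Finset.sum_range_succ] at this
  omega

theorem add_le_getD_partsDesc (hb : 1 ≤ b) (hab : b ≤ a) (hj : 1 ≤ j)
    (hne : (Dj a b (j + 1) n).Nonempty) {P : Nat.Partition n} (hP : P ∈ Dj a b j n) :
    a + b ≤ (partsDesc P).getD (j - 1) 0 := by
  obtain ⟨Q, hQ⟩ := hne
  exact (mem_Dj_iff.1 hP).add_le_getD_pred (mem_Dj_iff.1 hQ) hb hab hj
    (by rw [sum_partsDesc, sum_partsDesc])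

theorem isDjParts_mapFirst_sub_partsDesc (hb : 1 ≤ b) (hab : b ≤ a) (hj : 1 ≤ j)
    (hne : (Dj a b (j + 1) n).Nonempty) {P : Nat.Partition n} (hP : P ∈ Dj a b j n)
    (hP' : P ∉ Dj a b (j + 1) n) : IsDjParts a b j ((partsDesc P).mapFirst (· - a) j) :=
  (mem_Dj_iff.1 hP).mapFirst_sub hb (add_le_getD_partsDesc hb hab hj hne hP)
    (hP' ∘ mem_Dj_iff.2)

theorem sum_coe_mapFirst_sub_partsDesc (hb : 1 ≤ b) (hab : b ≤ a) (hj : 1 ≤ j)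
    (hne : (Dj a b (j + 1) n).Nonempty) {P : Nat.Partition n} (hP : P ∈ Dj a b j n) :
    (((partsDesc P).mapFirst (· - a) j : List ℕ) : Multiset ℕ).sum = n - a * j := by
  have := (mem_Dj_iff.1 hP).sum_mapFirst_sub_add (add_le_getD_partsDesc hb hab hj hne hP)
  rw [Multiset.sum_coe]
  rw [sum_partsDesc] at this
  omega

theorem sum_coe_mapFirst_add_partsDesc (hab : b ≤ a) (hne : (Dj a b (j + 1) n).Nonempty)
    {Q : Nat.Partition (n - a * j)} (hQ : Q ∈ Dj a b j (n - a * j)) :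
    (((partsDesc Q).mapFirst (· + a) j : List ℕ) : Multiset ℕ).sum = n := by
  rw [Multiset.sum_coe, List.sum_mapFirst_add a (mem_Dj_iff.1 hQ).le_length, sum_partsDesc]
  have := mul_le_of_Dj_succ_nonempty hab hne
  omega

noncomputable def lowerFirst (hb : 1 ≤ b) (hab : b ≤ a) (hj : 1 ≤ j)
    (hne : (Dj a b (j + 1) n).Nonempty)
    (P : {P : Nat.Partition n // P ∈ Dj a b j n ∧ P ∉ Dj a b (j + 1) n}) :
    {Q : Nat.Partition (n - a * j) // Q ∈ Dj a b j (n - a * j)} :=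
  have hL := isDjParts_mapFirst_sub_partsDesc hb hab hj hne P.2.1 P.2.2
  ⟨.ofSums _ _ (sum_coe_mapFirst_sub_partsDesc hb hab hj hne P.2.1),
    (mem_Dj_ofSums_iff hL.sortedGT hL.pos _).2 hL⟩

theorem partsDesc_lowerFirst (hb : 1 ≤ b) (hab : b ≤ a) (hj : 1 ≤ j)
    (hne : (Dj a b (j + 1) n).Nonempty)
    (P : {P : Nat.Partition n // P ∈ Dj a b j n ∧ P ∉ Dj a b (j + 1) n}) :
    partsDesc (lowerFirst hb hab hj hne P).1 = (partsDesc P.1).mapFirst (· - a) j :=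
  have hL := isDjParts_mapFirst_sub_partsDesc hb hab hj hne P.2.1 P.2.2
  partsDesc_ofSums hL.sortedGT hL.pos (sum_coe_mapFirst_sub_partsDesc hb hab hj hne P.2.1)

noncomputable def raiseFirst (hab : b ≤ a) (hj : 1 ≤ j) (hne : (Dj a b (j + 1) n).Nonempty)
    (Q : {Q : Nat.Partition (n - a * j) // Q ∈ Dj a b j (n - a * j)}) :
    {P : Nat.Partition n // P ∈ Dj a b j n ∧ P ∉ Dj a b (j + 1) n} :=
  have hQ := mem_Dj_iff.1 Q.2
  have hL := hQ.mapFirst_add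
  ⟨.ofSums _ _ (sum_coe_mapFirst_add_partsDesc hab hne Q.2),
    (mem_Dj_ofSums_iff hL.sortedGT hL.pos _).2 hL,
    mt (mem_Dj_ofSums_iff hL.sortedGT hL.pos _).1 (hQ.not_isDjParts_succ_mapFirst_add hj)⟩

theorem partsDesc_raiseFirst (hab : b ≤ a) (hj : 1 ≤ j) (hne : (Dj a b (j + 1) n).Nonempty)
    (Q : {Q : Nat.Partition (n - a * j) // Q ∈ Dj a b j (n - a * j)}) :
    partsDesc (raiseFirst hab hj hne Q).1 = (partsDesc Q.1).mapFirst (· + a) j :=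
  have hL := (mem_Dj_iff.1 Q.2).mapFirst_add
  partsDesc_ofSums hL.sortedGT hL.pos (sum_coe_mapFirst_add_partsDesc hab hne Q.2)

noncomputable def lowerFirstEquiv (hb : 1 ≤ b) (hab : b ≤ a) (hj : 1 ≤ j)
    (hne : (Dj a b (j + 1) n).Nonempty) :
    {P : Nat.Partition n // P ∈ Dj a b j n ∧ P ∉ Dj a b (j + 1) n} ≃
      {Q : Nat.Partition (n - a * j) // Q ∈ Dj a b j (n - a * j)} where
  toFun := lowerFirst hb hab hj hne
  invFun := raiseFirst hab hj hne
  left_inv P := Subtype.ext <| partsDesc_injective <| by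
    rw [partsDesc_raiseFirst, partsDesc_lowerFirst]
    exact List.mapFirst_mapFirst_of_forall fun _ hi hij => Nat.sub_add_cancel <|
      (mem_Dj_iff.1 P.2.1).le_getElem_of_lt (add_le_getD_partsDesc hb hab hj hne P.2.1) hi hij
  right_inv Q := Subtype.ext <| partsDesc_injective <| by
    rw [partsDesc_lowerFirst, partsDesc_raiseFirst]
    exact List.mapFirst_mapFirst_of_forall fun _ _ _ => Nat.add_sub_cancel _ _

end LowerFirst

/-- Subtracting `a` from each of the first `j` parts is a bijection from
`D^j_{a,b}(n) \ D^{j+1}_{a,b}(n)` to `D^j_{a,b}(n - aj)`, provided `D^{j+1}_{a,b}(n)`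
is nonempty. -/
theorem stmt5 (a b j n : ℕ) (hb : 1 ≤ b) (hab : b ≤ a) (hj : 1 ≤ j)
    (hne : (Dj a b (j + 1) n).Nonempty) :
    ∃ e : {P : Nat.Partition n // P ∈ Dj a b j n ∧ P ∉ Dj a b (j + 1) n} ≃
        {Q : Nat.Partition (n - a * j) // Q ∈ Dj a b j (n - a * j)},
      ∀ P, partsDesc (e P).1 =
        (partsDesc P.1).mapIdx (fun i x => if i < j then x - a else x) :=
  ⟨lowerFirstEquiv hb hab hj hne, partsDesc_lowerFirst hb hab hj hne⟩
end

section
/- Let a ≥ b ≥ 1, c ≥ 0, d ≥ 2, and A = {n : n ≡ bc (mod a)}. Then there exist residues r, s with 0 ≤ r < s < d such that |D_{a,b}(n)| ≡ r (mod d) for infinitely many n ∈ A and |D_{a,b}(n)| ≡ s (mod d) for infinitely many n ∈ A. -/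
open Finset PowerSeries

namespace PowerSeries

variable {R ι : Type*} [CommRing R]

theorem prod_one_sub_X_pow_eq_sum (s : Finset ι) (w : ι → ℕ) :
    ∏ i ∈ s, (1 - X ^ w i : R⟦X⟧) = ∑ t ∈ s.powerset, C ((-1) ^ #t) * X ^ ∑ i ∈ t, w i := by
  classical
  have h : ∀ i, (1 - X ^ w i : R⟦X⟧) = C (-1) * X ^ w i + 1 := fun i => by
    rw [map_neg, map_one, neg_one_mul, neg_add_eq_sub]
  simp_rw [h, prod_add, prod_const_one, mul_one, prod_mul_distrib, prod_const, prod_pow_eq_pow_sum,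
    map_pow]

theorem coeff_prod_one_sub_X_pow (s : Finset ι) (w : ι → ℕ) (n : ℕ) :
    coeff n (∏ i ∈ s, (1 - X ^ w i : R⟦X⟧)) =
      ∑ t ∈ s.powerset with ∑ i ∈ t, w i = n, (-1 : R) ^ #t := by
  rw [prod_one_sub_X_pow_eq_sum, map_sum, sum_filter]
  refine sum_congr rfl fun t _ => ?_
  rw [coeff_C_mul, coeff_X_pow]
  split_ifs <;> simp_all [eq_comm]

theorem coeff_prod_one_sub_X_pow_of_lt {s : Finset ι} {w : ι → ℕ} {n : ℕ}
    (h : ∑ i ∈ s, w i < n) : coeff n (∏ i ∈ s, (1 - X ^ w i : R⟦X⟧)) = 0 := by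
  rw [coeff_prod_one_sub_X_pow, filter_eq_empty_iff.2 fun t ht ht' => ?_, sum_empty]
  have := sum_le_sum_of_subset (f := w) (mem_powerset.1 ht)
  omega

theorem dvd_of_coeff_prod_one_sub_X_pow_ne_zero {s : Finset ι} {w : ι → ℕ} {a n : ℕ}
    (hw : ∀ i ∈ s, a ∣ w i) (h : coeff n (∏ i ∈ s, (1 - X ^ w i : R⟦X⟧)) ≠ 0) : a ∣ n := by
  rw [coeff_prod_one_sub_X_pow] at h
  obtain ⟨t, ht⟩ := exists_ne_zero_of_sum_ne_zero h
  rw [mem_filter, mem_powerset] at ht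
  exact ht.1.2 ▸ dvd_sum fun i hi => hw i (ht.1.1 hi)

theorem constantCoeff_prod_one_sub_X_pow {s : Finset ι} {w : ι → ℕ} (hw : ∀ i ∈ s, w i ≠ 0) :
    constantCoeff (∏ i ∈ s, (1 - X ^ w i : R⟦X⟧)) = 1 := by
  rw [map_prod]
  exact prod_eq_one fun i hi => by simp [zero_pow (hw i hi)]

theorem coeff_mul_eq_zero_of_mod_ne {f g : R⟦X⟧} {a r n : ℕ} (hf : ∀ i, coeff i f ≠ 0 → a ∣ i)
    (hg : ∀ j, coeff j g ≠ 0 → j % a = r) (hn : n % a ≠ r) : coeff n (f * g) = 0 := by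
  rw [coeff_mul]
  refine sum_eq_zero fun ij hij => ?_
  by_contra h
  obtain ⟨k, hk⟩ := hf ij.1 (left_ne_zero_of_mul h)
  have := hg ij.2 (right_ne_zero_of_mul h)
  rw [← mem_antidiagonal.1 hij, hk, Nat.mul_add_mod] at hn
  exact hn this

theorem exists_eq_X_pow_mul_of_mul_eq {H Q : R⟦X⟧} {e : ℕ} (hQ : constantCoeff Q = 1)
    (h : H * Q = X ^ e) : ∃ V : R⟦X⟧, constantCoeff V = 1 ∧ H = X ^ e * V := by
  obtain ⟨u, rfl⟩ := isUnit_iff_constantCoeff.2 (hQ ▸ isUnit_one)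
  refine ⟨↑u⁻¹, ?_, (Units.eq_mul_inv_iff_mul_eq u).2 h⟩
  have := congrArg constantCoeff u.inv_mul
  rwa [map_mul, hQ, mul_one, map_one] at this

theorem coeff_prod_one_sub_X_pow_mul (s : Finset ι) (w : ι → ℕ) (F : R⟦X⟧) {n : ℕ}
    (h : ∑ i ∈ s, w i ≤ n) :
    coeff n ((∏ i ∈ s, (1 - X ^ w i)) * F) =
      ∑ t ∈ s.powerset, (-1) ^ #t * coeff (n - ∑ i ∈ t, w i) F := by
  rw [prod_one_sub_X_pow_eq_sum, sum_mul, map_sum]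
  refine sum_congr rfl fun t ht => ?_
  rw [mul_assoc, coeff_C_mul, coeff_X_pow_mul',
    if_pos ((sum_le_sum_of_subset (mem_powerset.1 ht)).trans h)]

end PowerSeries

namespace Finset

theorem card_image_add_one (J : Finset ℕ) : #(J.image (· + 1)) = #J :=
  card_image_of_injective _ (add_left_injective 1)

theorem sum_image_add_one (J : Finset ℕ) : ∑ j ∈ J.image (· + 1), j = ∑ j ∈ J, j + #J := by
  rw [sum_image fun _ _ _ _ h => add_left_injective 1 h, sum_add_distrib, sum_const, smul_eq_mul,
    mul_one]

theorem zero_notMem_image_add_one (J : Finset ℕ) : 0 ∉ J.image (· + 1) := by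
  simp

theorem image_sub_one_image_add_one (J : Finset ℕ) : (J.image (· + 1)).image (· - 1) = J := by
  simp [image_image, Function.comp_def]

theorem exists_eq_image_add_one {J : Finset ℕ} (hJ : 0 ∉ J) :
    ∃ J' : Finset ℕ, J = J'.image (· + 1) := by
  refine ⟨J.image (· - 1), ?_⟩
  rw [image_image]
  conv_lhs => rw [← image_id (s := J)]
  refine image_congr fun j hj => (Nat.sub_add_cancel (Nat.pos_of_ne_zero ?_)).symm
  rintro rfl; exact hJ hj

theorem choose_two_add_sum_Ioc {k m : ℕ} (hkm : k ≤ m) :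
    (k + 1).choose 2 + ∑ i ∈ Ioc k m, i = (m + 1).choose 2 := by
  induction m, hkm using Nat.le_induction with
  | base => simp
  | succ m hkm ih =>
    rw [sum_Ioc_succ_top (by omega), ← add_assoc, ih, Nat.choose_succ_succ' (m + 1),
      Nat.choose_one_right]
    ring

theorem sum_le_choose_two_of_subset_Ioc {t : Finset ℕ} {m : ℕ} (ht : t ⊆ Ioc 0 m) :
    ∑ i ∈ t, i ≤ (m + 1).choose 2 :=
  calc ∑ i ∈ t, i ≤ ∑ i ∈ Ioc 0 m, i := sum_le_sum_of_subset ht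
    _ = (m + 1).choose 2 := by simpa using choose_two_add_sum_Ioc (Nat.zero_le m)

end Finset

namespace APPartition

-- `J` encodes the partition into the distinct parts `b + a * j`, `j ∈ J`; the bound
-- `range (n + 1)` only serves to make the set finite (see `mem_indexSets`).
def indexSets (a b n : ℕ) : Finset (Finset ℕ) :=
  (range (n + 1)).powerset.filter fun J => #J * b + a * ∑ j ∈ J, j = n

variable {a b : ℕ}

theorem mem_indexSets (ha : 0 < a) {n : ℕ} {J : Finset ℕ} :
    J ∈ indexSets a b n ↔ #J * b + a * ∑ j ∈ J, j = n := by
  refine ⟨fun h => (mem_filter.1 h).2, fun h => mem_filter.2 ⟨?_, h⟩⟩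
  refine mem_powerset.2 fun j hj => mem_range.2 ?_
  have : j ≤ ∑ i ∈ J, i := single_le_sum (f := fun i => i) (fun _ _ => Nat.zero_le _) hj
  have : ∑ i ∈ J, i ≤ a * ∑ i ∈ J, i := Nat.le_mul_of_pos_left _ ha
  omega

theorem card_filter_zero_notMem (ha : 0 < a) (k n : ℕ) :
    #{J ∈ indexSets a b n | #J = k ∧ 0 ∉ J} =
      if a * k ≤ n then #{J ∈ indexSets a b (n - a * k) | #J = k} else 0 := by
  split_ifs with h
  · refine card_bij' (fun J _ => J.image (· - 1)) (fun J _ => J.image (· + 1)) ?_ ?_ ?_ ?_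
    · intro J hJ
      simp only [mem_filter, mem_indexSets ha] at hJ ⊢
      obtain ⟨J, rfl⟩ := exists_eq_image_add_one hJ.2.2
      rw [image_sub_one_image_add_one]
      rw [card_image_add_one, sum_image_add_one, mul_add] at hJ
      obtain ⟨hsum, rfl, -⟩ := hJ
      exact ⟨by omega, rfl⟩
    · intro J hJ
      simp only [mem_filter, mem_indexSets ha] at hJ ⊢
      obtain ⟨hsum, rfl⟩ := hJ
      rw [card_image_add_one, sum_image_add_one, mul_add]
      exact ⟨by omega, rfl, zero_notMem_image_add_one J⟩
    · intro J hJ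
      obtain ⟨J, rfl⟩ := exists_eq_image_add_one (mem_filter.1 hJ).2.2
      rw [image_sub_one_image_add_one]
    · intro J _; exact image_sub_one_image_add_one J
  · refine card_eq_zero.2 (filter_eq_empty_iff.2 fun J hJ ⟨hk, h0⟩ => h ?_)
    obtain ⟨J, rfl⟩ := exists_eq_image_add_one h0
    rw [mem_indexSets ha, card_image_add_one, sum_image_add_one, mul_add] at hJ
    rw [card_image_add_one] at hk
    subst hk
    omega

theorem card_filter_zero_mem (ha : 0 < a) (k n : ℕ) :
    #{J ∈ indexSets a b n | #J = k + 1 ∧ 0 ∈ J} =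
      if b ≤ n then #{J ∈ indexSets a b (n - b) | #J = k ∧ 0 ∉ J} else 0 := by
  split_ifs with h
  · refine card_bij' (fun J _ => J.erase 0) (fun J _ => insert 0 J) ?_ ?_ ?_ ?_
    · intro J hJ
      simp only [mem_filter, mem_indexSets ha] at hJ ⊢
      obtain ⟨hsum, hk, h0⟩ := hJ
      rw [card_erase_of_mem h0, hk, Nat.add_sub_cancel, sum_erase J (f := fun j => j) rfl]
      rw [hk, add_mul, one_mul] at hsum
      exact ⟨by omega, rfl, notMem_erase (0 : ℕ) J⟩
    · intro J hJ
      simp only [mem_filter, mem_indexSets ha] at hJ ⊢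
      obtain ⟨hsum, rfl, h0⟩ := hJ
      rw [card_insert_of_notMem h0, sum_insert h0, zero_add, add_mul, one_mul]
      exact ⟨by omega, rfl, mem_insert_self 0 J⟩
    · intro J hJ; exact insert_erase (mem_filter.1 hJ).2.2
    · intro J hJ; exact erase_insert (mem_filter.1 hJ).2.2
  · refine card_eq_zero.2 (filter_eq_empty_iff.2 fun J hJ ⟨hk, _⟩ => h ?_)
    rw [mem_indexSets ha, hk, add_mul, one_mul] at hJ
    omega

theorem card_filter_card_eq_add_one (ha : 0 < a) (k n : ℕ) :
    #{J ∈ indexSets a b n | #J = k + 1} =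
      (if a * (k + 1) ≤ n then #{J ∈ indexSets a b (n - a * (k + 1)) | #J = k + 1} else 0) +
        if b + a * k ≤ n then #{J ∈ indexSets a b (n - (b + a * k)) | #J = k} else 0 := by
  rw [← card_filter_add_card_filter_not (fun J => 0 ∉ J), filter_filter, filter_filter,
    card_filter_zero_notMem ha]
  simp_rw [not_not]
  rw [card_filter_zero_mem ha, card_filter_zero_notMem ha k, Nat.sub_sub]
  congr 1
  split_ifs <;> first | rfl | omega

def genFun (R : Type*) [CommRing R] (a b k : ℕ) : R⟦X⟧ :=
  PowerSeries.mk fun n => (#{J ∈ indexSets a b n | #J = k} : R)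

variable (R : Type*) [CommRing R]

theorem coeff_genFun (k n : ℕ) : coeff n (genFun R a b k) = #{J ∈ indexSets a b n | #J = k} :=
  coeff_mk _ _

theorem one_sub_X_pow_mul_genFun_add_one (ha : 0 < a) (k : ℕ) :
    (1 - X ^ (a * (k + 1))) * genFun R a b (k + 1) = X ^ (b + a * k) * genFun R a b k := by
  ext n
  rw [sub_mul, one_mul, map_sub, coeff_X_pow_mul', coeff_X_pow_mul', coeff_genFun, coeff_genFun,
    coeff_genFun, card_filter_card_eq_add_one ha]
  split_ifs <;> push_cast <;> ring

theorem genFun_zero (ha : 0 < a) : genFun R a b 0 = 1 := by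
  ext n
  simp only [coeff_genFun, coeff_one, card_eq_zero, filter_eq', mem_indexSets ha, card_empty,
    sum_empty, zero_mul, mul_zero, add_zero, eq_comm (a := 0)]
  split_ifs <;> simp

theorem prod_one_sub_X_pow_mul_genFun (ha : 0 < a) (k : ℕ) :
    (∏ i ∈ Ioc 0 k, (1 - X ^ (a * i))) * genFun R a b k = X ^ (k * b + a * k.choose 2) := by
  induction k with
  | zero => simp [genFun_zero R ha]
  | succ k ih =>
    rw [prod_Ioc_succ_top (Nat.zero_le k), mul_assoc, one_sub_X_pow_mul_genFun_add_one R ha,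
      mul_left_comm, ih, ← pow_add, Nat.choose_succ_succ', Nat.choose_one_right]
    ring_nf

theorem mod_eq_of_coeff_genFun_ne_zero (ha : 0 < a) {k n : ℕ} (h : coeff n (genFun R a b k) ≠ 0) :
    n % a = k * b % a := by
  rw [coeff_genFun] at h
  obtain ⟨J, hJ⟩ := card_ne_zero.1 fun h' => h (by rw [h', Nat.cast_zero])
  rw [mem_filter, mem_indexSets ha] at hJ
  rw [← hJ.1, hJ.2, Nat.add_mul_mod_self_left]

theorem add_mul_sub_div_eq {y : ℕ} (hab : b ≤ a) (hy0 : 0 < y) (hy : y % a = b % a) :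
    b + a * ((y - b) / a) = y := by
  have hby : b ≤ y := by
    by_contra h
    rw [Nat.mod_eq_of_lt (by omega : y < a)] at hy
    rcases hab.lt_or_eq with h' | rfl
    · rw [Nat.mod_eq_of_lt h'] at hy; omega
    · rw [Nat.mod_self] at hy; omega
  rw [Nat.mul_div_cancel' ((Nat.modEq_iff_dvd' hby).1 hy.symm), Nat.add_sub_cancel' hby]

theorem map_image_toFinset_parts (hab : b ≤ a) {n : ℕ} {P : n.Partition}
    (hP : P ∈ Dab a b n) :
    (P.parts.toFinset.image fun y => (y - b) / a).val.map (fun j => b + a * j) = P.parts := by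
  obtain ⟨hnd, hmod⟩ := (mem_filter.1 hP).2
  have hinv : ∀ y ∈ P.parts, b + a * ((y - b) / a) = y := fun y hy =>
    add_mul_sub_div_eq hab (P.parts_pos hy) (hmod y hy)
  rw [image_val_of_injOn fun y hy z hz h => ?_, Multiset.map_map, Multiset.toFinset_val,
    Multiset.dedup_eq_self.2 hnd]
  · exact (Multiset.map_congr rfl hinv).trans (Multiset.map_id _)
  · rw [← hinv y (Multiset.mem_toFinset.1 hy), ← hinv z (Multiset.mem_toFinset.1 hz), h]

theorem sum_map_val_add_mul (J : Finset ℕ) :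
    (J.val.map fun j => b + a * j).sum = #J * b + a * ∑ j ∈ J, j := by
  change ∑ j ∈ J, (b + a * j) = _
  rw [sum_add_distrib, sum_const, smul_eq_mul, mul_sum]

theorem card_Dab (hb : 0 < b) (hab : b ≤ a) (n : ℕ) : #(Dab a b n) = #(indexSets a b n) := by
  have ha : 0 < a := hb.trans_le hab
  have hg : Function.Injective fun j => b + a * j := fun i j h =>
    Nat.eq_of_mul_eq_mul_left ha (Nat.add_left_cancel h)
  refine card_bij' (fun P _ => P.parts.toFinset.image fun y => (y - b) / a)
    (fun J hJ => ⟨J.val.map fun j => b + a * j, fun hy => ?_, ?_⟩) (fun P hP => ?_) (fun J hJ => ?_)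
    (fun P hP => ?_) (fun J hJ => ?_)
  · obtain ⟨j, -, rfl⟩ := Multiset.mem_map.1 hy
    omega
  · rw [sum_map_val_add_mul, (mem_indexSets ha).1 hJ]
  · have := P.parts_sum
    rwa [← map_image_toFinset_parts hab hP, sum_map_val_add_mul, ← mem_indexSets ha] at this
  · refine mem_filter.2 ⟨mem_univ _, (J.nodup.map hg), fun y hy => ?_⟩
    obtain ⟨j, -, rfl⟩ := Multiset.mem_map.1 hy
    exact Nat.add_mul_mod_self_left b a j
  · exact Nat.Partition.ext (map_image_toFinset_parts hab hP)
  · simp [Multiset.toFinset_map, image_image, Function.comp_def, Nat.mul_div_cancel_left _ ha]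

theorem coeff_sum_genFun (hb : 0 < b) {n N : ℕ} (hn : n ≤ N) :
    coeff n (∑ k ∈ range (N + 1), genFun R a b k) = #(indexSets a b n) := by
  simp only [map_sum, coeff_genFun, ← Nat.cast_sum]
  rw [card_eq_sum_card_fiberwise fun J hJ => mem_range.2 ?_]
  have := (mem_filter.1 hJ).2
  have : #J ≤ #J * b := Nat.le_mul_of_pos_right _ hb
  omega

theorem coeff_prod_mul_genFun_of_le (ha : 0 < a) (hb : 0 < b) {k m K : ℕ} (hkm : k ≤ m)
    (hmK : m < K) :
    coeff (K * b + a * K.choose 2) ((∏ i ∈ Ioc 0 m, (1 - X ^ (a * i))) * genFun R a b k) = 0 := by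
  rw [← prod_Ioc_consecutive _ (Nat.zero_le k) hkm, mul_right_comm,
    prod_one_sub_X_pow_mul_genFun R ha, coeff_X_pow_mul']
  split_ifs with h
  · refine coeff_prod_one_sub_X_pow_of_lt ?_
    have := choose_two_add_sum_Ioc hkm
    have := Nat.choose_le_choose 2 (Nat.le_add_right k 1)
    have := Nat.choose_le_choose 2 (show m + 1 ≤ K by omega)
    have : k * b < K * b := Nat.mul_lt_mul_of_pos_right (by omega) hb
    have := Nat.mul_le_mul_left a (show k.choose 2 + ∑ i ∈ Ioc k m, i ≤ K.choose 2 by omega)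
    rw [← mul_sum]
    rw [mul_add] at this
    omega
  · rfl

theorem coeff_prod_mul_genFun_of_lt (ha : 0 < a) (hb : 0 < b) {k m K : ℕ} (hmk : m < k)
    (hK : ∀ k, m < k → k < K → k * b % a ≠ K * b % a) :
    coeff (K * b + a * K.choose 2) ((∏ i ∈ Ioc 0 m, (1 - X ^ (a * i))) * genFun R a b k) =
      if k = K then 1 else 0 := by
  have hprod : ((∏ i ∈ Ioc 0 m, (1 - X ^ (a * i))) * genFun R a b k) *
      ∏ i ∈ Ioc m k, (1 - X ^ (a * i)) = X ^ (k * b + a * k.choose 2) := by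
    rw [mul_right_comm, prod_Ioc_consecutive _ (Nat.zero_le m) hmk.le,
      prod_one_sub_X_pow_mul_genFun R ha]
  obtain ⟨V, hV, hPG⟩ := exists_eq_X_pow_mul_of_mul_eq (constantCoeff_prod_one_sub_X_pow
    fun i hi => (Nat.mul_pos ha ((Nat.zero_le m).trans_lt (mem_Ioc.1 hi).1)).ne') hprod
  rcases lt_trichotomy k K with hkK | rfl | hKk
  · rw [if_neg hkK.ne]
    refine coeff_mul_eq_zero_of_mod_ne (fun i hi => dvd_of_coeff_prod_one_sub_X_pow_ne_zero
      (fun i _ => dvd_mul_right a i) hi) (fun j hj => mod_eq_of_coeff_genFun_ne_zero R ha hj) ?_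
    rw [Nat.add_mul_mod_self_left]
    exact (hK k hmk hkK).symm
  · rw [hPG, if_pos rfl, coeff_X_pow_mul', if_pos le_rfl, Nat.sub_self, coeff_zero_eq_constantCoeff,
      hV]
  · rw [if_neg hKk.ne', hPG, coeff_X_pow_mul', if_neg]
    have := Nat.choose_le_choose 2 hKk.le
    have : K * b < k * b := Nat.mul_lt_mul_of_pos_right hKk hb
    nlinarith

theorem coeff_prod_mul_sum_genFun (ha : 0 < a) (hb : 0 < b) {m K : ℕ} (hmK : m < K)
    (hK : ∀ k, m < k → k < K → k * b % a ≠ K * b % a) :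
    coeff (K * b + a * K.choose 2) ((∏ i ∈ Ioc 0 m, (1 - X ^ (a * i))) *
      ∑ k ∈ range (K * b + a * K.choose 2 + 1), genFun R a b k) = 1 := by
  rw [mul_sum, map_sum, sum_eq_single K]
  · rw [coeff_prod_mul_genFun_of_lt R ha hb hmK hK, if_pos rfl]
  · intro k _ hkK
    rcases le_or_gt k m with hkm | hmk
    · exact coeff_prod_mul_genFun_of_le R ha hb hkm hmK
    · rw [coeff_prod_mul_genFun_of_lt R ha hb hmk hK, if_neg hkK]
  · intro hK
    have : K ≤ K * b := Nat.le_mul_of_pos_right K hb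
    exact absurd (mem_range.2 (by omega)) hK

theorem alternating_sum_card_Dab (hb : 0 < b) (hab : b ≤ a) {m K : ℕ} (hmK : m < K)
    (hK : ∀ k, m < k → k < K → k * b % a ≠ K * b % a) :
    ∑ t ∈ (Ioc 0 m).powerset,
      (-1) ^ #t * (#(Dab a b (K * b + a * (K.choose 2 - ∑ i ∈ t, i))) : R) = 1 := by
  have ha : 0 < a := hb.trans_le hab
  have hle : ∀ t ⊆ Ioc 0 m, ∑ i ∈ t, i ≤ K.choose 2 := fun t ht =>
    (sum_le_choose_two_of_subset_Ioc ht).trans (Nat.choose_le_choose 2 hmK)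
  have hsum : ∑ i ∈ Ioc 0 m, a * i ≤ K * b + a * K.choose 2 := by
    rw [← mul_sum]
    exact (Nat.mul_le_mul_left a (hle _ subset_rfl)).trans (Nat.le_add_left _ _)
  refine .trans ?_ (coeff_prod_mul_sum_genFun R ha hb hmK hK)
  rw [coeff_prod_one_sub_X_pow_mul _ _ _ hsum]
  refine sum_congr rfl fun t ht => ?_
  have := Nat.mul_le_mul_left a (hle t (mem_powerset.1 ht))
  rw [← mul_sum, coeff_sum_genFun R hb (Nat.sub_le _ _), card_Dab hb hab, Nat.mul_sub]
  congr 4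
  omega

end APPartition

theorem exists_eventually_mod_eq (A : Set ℕ) (f : ℕ → ℕ) {d : ℕ} (hd : 0 < d)
    (h : ¬∃ r s : ℕ, r < s ∧ s < d ∧ {n | n ∈ A ∧ f n % d = r}.Infinite ∧
      {n | n ∈ A ∧ f n % d = s}.Infinite) :
    ∃ r N, ∀ n ∈ A, N ≤ n → f n % d = r := by
  obtain ⟨r, hr⟩ : ∃ r, ∀ s < d, s ≠ r → {n | n ∈ A ∧ f n % d = s}.Finite := by
    by_cases hinf : ∃ r < d, {n | n ∈ A ∧ f n % d = r}.Infinite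
    · obtain ⟨r, hrd, hr⟩ := hinf
      refine ⟨r, fun s hsd hsr => Set.not_infinite.1 fun hs => h ?_⟩
      rcases hsr.lt_or_gt with hsr | hrs
      · exact ⟨s, r, hsr, hrd, hs, hr⟩
      · exact ⟨r, s, hrs, hsd, hr, hs⟩
    · push Not at hinf
      exact ⟨0, fun s hsd _ => hinf s hsd⟩
  have hfin : {n | n ∈ A ∧ f n % d ≠ r}.Finite := by
    refine (Set.Finite.biUnion ((range d).erase r).finite_toSet fun s hs => ?_).subset
      fun n hn => Set.mem_biUnion (t := fun s => {n | n ∈ A ∧ f n % d = s})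
        (mem_erase.2 ⟨hn.2, mem_range.2 (Nat.mod_lt _ hd)⟩) ⟨hn.1, rfl⟩
    obtain ⟨hsr, hsd⟩ := mem_erase.1 hs
    exact hr s (mem_range.1 hsd) hsr
  obtain ⟨N, hN⟩ := hfin.bddAbove
  exact ⟨r, N + 1, fun n hn hNn => by_contra fun hne => absurd (hN ⟨hn, hne⟩) (by omega)⟩

theorem exists_min_gt_mul_mod_eq {a : ℕ} (ha : 0 < a) (b c m : ℕ) :
    ∃ K, m < K ∧ K * b % a = b * c % a ∧ ∀ k, m < k → k < K → k * b % a ≠ K * b % a := by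
  have hex : ∃ K, m < K ∧ K * b % a = b * c % a := by
    refine ⟨c + a * (m + 1), ?_, ?_⟩
    · nlinarith
    · rw [add_mul, mul_assoc, Nat.add_mul_mod_self_left, mul_comm]
  obtain ⟨hmK, hK⟩ := Nat.find_spec hex
  exact ⟨Nat.find hex, hmK, hK, fun k hmk hkK hk => Nat.find_min hex hkK ⟨hmk, hk.trans hK⟩⟩

/-- There are residues `r < s < d` such that `|D_{a,b}(n)| ≡ r (mod d)` for infinitely
many `n ≡ bc (mod a)`, and `|D_{a,b}(n)| ≡ s (mod d)` for infinitely many such `n`. -/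
theorem stmt10 (a b c d : ℕ) (hb : 1 ≤ b) (hab : b ≤ a) (hd : 2 ≤ d) :
    ∃ r s : ℕ, r < s ∧ s < d ∧
      {n : ℕ | n % a = (b * c) % a ∧ (Dab a b n).card % d = r}.Infinite ∧
      {n : ℕ | n % a = (b * c) % a ∧ (Dab a b n).card % d = s}.Infinite := by
  by_contra h
  obtain ⟨r, N, hN⟩ := exists_eventually_mod_eq {n | n % a = b * c % a} (fun n => #(Dab a b n))
    (by omega) h
  obtain ⟨K, hNK, hKc, hK⟩ := exists_min_gt_mul_mod_eq (hb.trans hab) b c (N + 1)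
  have hterm : ∀ t ∈ (Ioc 0 (N + 1)).powerset,
      (#(Dab a b (K * b + a * (K.choose 2 - ∑ i ∈ t, i))) : ZMod d) = r := by
    intro t _
    have hKb : K ≤ K * b := Nat.le_mul_of_pos_right K hb
    rw [← ZMod.natCast_mod, hN _ ((Nat.add_mul_mod_self_left _ _ _).trans hKc) (by omega)]
  have key := APPartition.alternating_sum_card_Dab (ZMod d) hb hab hNK hK
  rw [sum_congr rfl fun t ht => by rw [hterm t ht], ← sum_mul] at key
  have hsign : ∑ t ∈ (Ioc 0 (N + 1)).powerset, (-1 : ZMod d) ^ #t = 0 := by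
    exact_mod_cast congrArg (Int.cast : ℤ → ZMod d)
      (sum_powerset_neg_one_pow_card_of_nonempty ⟨N + 1, by simp⟩)
  rw [hsign, zero_mul, ← Nat.cast_one, eq_comm, ZMod.natCast_eq_zero_iff] at key
  exact absurd (Nat.le_of_dvd one_pos key) (by omega)
end

section
/- p(2n) takes each value of parity infinitely often: there are infinitely many n with p(2n) even and infinitely many n with p(2n) odd. -/
/-!
Modulo 2 the pentagonal number theorem reads `P · E = 1`, where `P = ∑ p(n) Xⁿ` and `E` is the
sum of `Xʲ` over the generalized pentagonal numbers `j`. In characteristic 2 we have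
`E² = E(X²)`, so taking the even-index coefficients of `P · E² = E` gives `A · E = E_even` with
`A = ∑ p(2n) Xⁿ`; that is, `∑_{j pentagonal} p(2n - 2j) ≡ [2n pentagonal] (mod 2)`.

If `p(2n)` were even beyond a last odd value `p(2m)`, take `n = j₀ + m` with `j₀` a pentagonal
number followed by a gap longer than `m`: the left side is `p(2m) ≡ 1`, while a congruence
modulo 5 lets one choose `j₀` so that `24 · 2n + 1` is not a square, so `2n` is not pentagonal.
If `p(2n)` were odd for all `n > N`, then for `n` just past a large pentagonal number `j₀` the
left side counts the pentagonal numbers up to `j₀`, an odd number. So `2n` and `2n + 2` would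
both be pentagonal, impossible for large `n` because `24 j + 1` is a square for pentagonal `j`.
-/

open Finset PowerSeries
open scoped PowerSeries.WithPiTopology

namespace PowerSeries

variable {R : Type*} [CommRing R]

noncomputable def evenPart (f : R⟦X⟧) : R⟦X⟧ := mk fun n ↦ coeff (2 * n) f

noncomputable def oddPart (f : R⟦X⟧) : R⟦X⟧ := mk fun n ↦ coeff (2 * n + 1) f

theorem expand_evenPart_add_X_mul_expand_oddPart (f : R⟦X⟧) :
    expand 2 two_ne_zero (evenPart f) + X * expand 2 two_ne_zero (oddPart f) = f := by
  ext n
  obtain ⟨m, rfl | rfl⟩ := Nat.even_or_odd' n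
  · rcases m with _ | m
    · simp [evenPart]
    · have h : ¬ 2 ∣ 2 * m + 1 := by omega
      rw [show 2 * (m + 1) = 2 * m + 1 + 1 by ring, map_add, coeff_succ_X_mul,
        coeff_expand_of_not_dvd _ _ _ h, add_zero, show 2 * m + 1 + 1 = 2 * (m + 1) by ring]
      simp [evenPart]
  · simp [coeff_expand, evenPart, oddPart]

theorem evenPart_expand_add_X_mul_expand (u v : R⟦X⟧) :
    evenPart (expand 2 two_ne_zero u + X * expand 2 two_ne_zero v) = u := by
  ext n
  rcases n with _ | n
  · simp [evenPart]
  · simp [evenPart, coeff_expand, show 2 * (n + 1) = 2 * n + 1 + 1 by ring]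

theorem evenPart_mul_expand (f g : R⟦X⟧) :
    evenPart (f * expand 2 two_ne_zero g) = evenPart f * g := by
  conv_lhs => rw [← expand_evenPart_add_X_mul_expand_oddPart f]
  rw [add_mul, mul_assoc, ← map_mul, ← map_mul, evenPart_expand_add_X_mul_expand]

end PowerSeries

theorem ZMod.expand_card_powerSeries (p : ℕ) [Fact p.Prime] (f : (ZMod p)⟦X⟧) :
    expand p (NeZero.ne p) f = f ^ p := by
  rw [← MvPowerSeries.map_frobenius_expand p (NeZero.ne p), ZMod.frobenius_zmod]
  exact congrFun PowerSeries.map_id _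

theorem PowerSeries.evenPart_mul_eq_evenPart_of_mul_eq_one {f g : (ZMod 2)⟦X⟧} (h : f * g = 1) :
    evenPart f * g = evenPart g := by
  rw [← evenPart_mul_expand, ZMod.expand_card_powerSeries, sq, ← mul_assoc, h, one_mul]

theorem Nat.Partition.powerSeriesMk_card_mul_pentagonalSeries (R : Type*) [CommRing R] :
    PowerSeries.mk (fun n ↦ (Fintype.card n.Partition : R)) * pentagonalSeries R = 1 := by
  let _ : TopologicalSpace R := ⊥
  have _ : DiscreteTopology R := ⟨rfl⟩
  have hP := Nat.Partition.hasProd_powerSeriesMk_card_restricted R (fun _ ↦ True)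
  simp only [↓reduceIte, Nat.Partition.restricted, implies_true, filter_true,
    Finset.card_univ] at hP
  rw [← hP.tprod_eq, ← WithPiTopology.tprod_one_sub_X_pow,
    ← hP.multipliable.tprod_mul (WithPiTopology.multipliable_one_sub_X_pow R)]
  refine (tprod_congr fun i ↦ ?_).trans tprod_one
  simp_rw [pow_mul]
  exact WithPiTopology.tsum_pow_mul_one_sub_of_constantCoeff_eq_zero (by simp)

theorem PowerSeries.coeff_pentagonalSeries_zmod_two_pentagonal (k : ℤ) :
    (pentagonalSeries (ZMod 2)).coeff (pentagonal k) = 1 := by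
  rw [coeff_pentagonalSeries_pentagonal]
  rcases Int.units_eq_one_or k.negOnePow with h | h <;> simp [h]

theorem Nat.Partition.sum_antidiagonal_card_two_mul_mul_coeff_pentagonalSeries (n : ℕ) :
    ∑ x ∈ antidiagonal n,
      (Fintype.card (2 * x.1).Partition : ZMod 2) * (pentagonalSeries (ZMod 2)).coeff x.2 =
    (pentagonalSeries (ZMod 2)).coeff (2 * n) := by
  have := congrArg (coeff n) <| evenPart_mul_eq_evenPart_of_mul_eq_one <|
    powerSeriesMk_card_mul_pentagonalSeries (ZMod 2)
  simpa [coeff_mul, evenPart] using this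

theorem twentyFour_mul_pentagonal_add_one (k : ℤ) :
    24 * (pentagonal k : ℤ) + 1 = (6 * k - 1) ^ 2 := by
  linear_combination 12 * two_mul_natCast_pentagonal k

theorem natCast_pentagonal_neg (k : ℤ) : (pentagonal (-k) : ℤ) = pentagonal k + k := by
  linarith [two_mul_natCast_pentagonal_neg k, two_mul_natCast_pentagonal k]

theorem natCast_pentagonal_add_one (k : ℤ) :
    (pentagonal (k + 1) : ℤ) = pentagonal (-k) + 2 * k + 1 := by
  linarith [two_mul_natCast_pentagonal (k + 1), two_mul_natCast_pentagonal_neg k]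

theorem pentagonal_le_pentagonal_iff {i j : ℤ} :
    pentagonal i ≤ pentagonal j ↔ |6 * i - 1| ≤ |6 * j - 1| := by
  rw [← sq_le_sq, ← twentyFour_mul_pentagonal_add_one, ← twentyFour_mul_pentagonal_add_one]
  omega

theorem pentagonal_lt_pentagonal_iff {i j : ℤ} :
    pentagonal i < pentagonal j ↔ |6 * i - 1| < |6 * j - 1| := by
  simpa only [not_le] using pentagonal_le_pentagonal_iff.not

theorem notMem_range_pentagonal_of_lt_of_lt {k : ℤ} {m : ℕ} (h₁ : pentagonal k < m)
    (h₂ : m < pentagonal (-k)) : m ∉ Set.range pentagonal := by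
  rintro ⟨i, rfl⟩
  rw [pentagonal_lt_pentagonal_iff] at h₁ h₂
  rcases abs_cases (6 * k - 1) with hk | hk <;> rcases abs_cases (6 * -k - 1) with hk' | hk' <;>
    rcases abs_cases (6 * i - 1) with hi | hi <;> omega

theorem pentagonal_le_iff_mem_Icc {K n : ℕ} (h₁ : pentagonal (-K) ≤ n)
    (h₂ : n < pentagonal (K + 1)) {i : ℤ} : pentagonal i ≤ n ↔ i ∈ Icc (-K : ℤ) K := by
  rw [mem_Icc]
  constructor
  · intro h
    have : pentagonal i < pentagonal (K + 1) := by omega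
    rw [pentagonal_lt_pentagonal_iff] at this
    rcases abs_cases (6 * i - 1) with hi | hi <;>
      rcases abs_cases (6 * ((K : ℤ) + 1) - 1) with hK | hK <;> omega
  · intro h
    refine le_trans (pentagonal_le_pentagonal_iff.2 ?_) h₁
    rcases abs_cases (6 * i - 1) with hi | hi <;>
      rcases abs_cases (6 * -(K : ℤ) - 1) with hK | hK <;> omega

theorem pentagonal_lt_of_pentagonal_add_two_eq {a b : ℤ} (h : pentagonal a + 2 = pentagonal b) :
    pentagonal a < 23 := by
  have ha := twentyFour_mul_pentagonal_add_one a
  have hb := twentyFour_mul_pentagonal_add_one b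
  rw [← sq_abs] at ha hb
  set x := |6 * a - 1|
  set y := |6 * b - 1|
  have hx : 0 ≤ x := abs_nonneg _
  have hy : 0 ≤ y := abs_nonneg _
  have hxy : x ^ 2 + 48 = y ^ 2 := by push_cast [← h] at hb; linarith
  have hlt : x < y := by nlinarith
  have : 2 * x + 1 ≤ 48 := by nlinarith
  have : x ≤ 23 := by omega
  have : x ^ 2 ≤ 23 ^ 2 := by gcongr
  omega

theorem exists_lt_two_mul_pentagonal_add_notMem (c : ℕ) (N : ℤ) :
    ∃ k, N < k ∧ 2 * (pentagonal k + c) ∉ Set.range pentagonal := by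
  obtain ⟨r, hr⟩ :
      ∃ r : ZMod 5, ∀ x : ZMod 5, x ^ 2 ≠ 2 * (6 * r - 1) ^ 2 + 48 * c - 1 := by
    generalize (c : ZMod 5) = c'
    revert c'
    decide
  refine ⟨5 * |N| + 5 + r.val, by have := le_abs_self N; have := abs_nonneg N; omega, ?_⟩
  rintro ⟨i, hi⟩
  apply hr (6 * i - 1)
  have hZ : (6 * i - 1) ^ 2 = 2 * (6 * (5 * |N| + 5 + r.val) - 1) ^ 2 + 48 * (c : ℤ) - 1 := by
    rw [← twentyFour_mul_pentagonal_add_one, ← twentyFour_mul_pentagonal_add_one, hi]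
    push_cast
    ring
  have := congrArg (Int.cast : ℤ → ZMod 5) hZ
  push_cast at this
  simpa [show (5 : ZMod 5) = 0 from rfl] using this

theorem sum_range_coeff_pentagonalSeries_zmod_two {K n : ℕ} (h₁ : pentagonal (-K) ≤ n)
    (h₂ : n < pentagonal (K + 1)) :
    ∑ j ∈ range (n + 1), (pentagonalSeries (ZMod 2)).coeff j = 1 := by
  have himage : (Icc (-K : ℤ) K).image pentagonal ⊆ range (n + 1) := by
    intro j hj
    obtain ⟨i, hi, rfl⟩ := mem_image.1 hj
    exact mem_range_succ_iff.2 ((pentagonal_le_iff_mem_Icc h₁ h₂).2 hi)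
  rw [← sum_subset himage, sum_image pentagonal_injective.injOn]
  · simp_rw [coeff_pentagonalSeries_zmod_two_pentagonal, sum_const, Int.card_Icc, nsmul_eq_mul,
      mul_one]
    rw [show ((K : ℤ) + 1 - -K).toNat = 2 * K + 1 by omega, Nat.cast_succ, Nat.cast_mul,
      show ((2 : ℕ) : ZMod 2) = 0 from rfl, zero_mul, zero_add]
  · intro j hj hj'
    apply coeff_pentagonalSeries_eq_zero
    rintro ⟨i, rfl⟩
    exact hj' (mem_image_of_mem _ ((pentagonal_le_iff_mem_Icc h₁ h₂).1 (by simpa using hj)))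

theorem Nat.Partition.two_mul_mem_range_pentagonal_of_forall_lt {N K n : ℕ}
    (hodd : ∀ m, N < m → (Fintype.card (2 * m).Partition : ZMod 2) = 1)
    (h₁ : pentagonal (-K) + N < n) (h₂ : n < pentagonal (K + 1)) :
    2 * n ∈ Set.range pentagonal := by
  by_contra h
  have key := sum_antidiagonal_card_two_mul_mul_coeff_pentagonalSeries n
  rw [coeff_pentagonalSeries_eq_zero _ h] at key
  have hterm : ∀ x ∈ antidiagonal n, (Fintype.card (2 * x.1).Partition : ZMod 2) *
      (pentagonalSeries (ZMod 2)).coeff x.2 = (pentagonalSeries (ZMod 2)).coeff x.2 := by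
    rintro ⟨a, j⟩ hx
    simp only [HasAntidiagonal.mem_antidiagonal] at hx
    by_cases hj : j ∈ Set.range pentagonal
    · obtain ⟨i, rfl⟩ := hj
      have hi := (pentagonal_le_iff_mem_Icc (by omega) h₂ (i := i)).1 (by omega)
      have hle : pentagonal i ≤ pentagonal (-K) :=
        (pentagonal_le_iff_mem_Icc le_rfl (by omega)).2 hi
      rw [hodd a (by omega), one_mul]
    · rw [coeff_pentagonalSeries_eq_zero _ hj, mul_zero]
  have hreflect := sum_range_reflect (fun j ↦ (pentagonalSeries (ZMod 2)).coeff j) (n + 1)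
  simp only [add_tsub_cancel_right] at hreflect
  rw [sum_congr rfl hterm, Nat.sum_antidiagonal_eq_sum_range_succ_mk, hreflect,
    sum_range_coeff_pentagonalSeries_zmod_two (by omega) h₂] at key
  exact one_ne_zero key

theorem Nat.Partition.infinite_setOf_card_two_mul_mod_two_eq_one :
    {n : ℕ | Fintype.card (Nat.Partition (2 * n)) % 2 = 1}.Infinite := by
  intro hfin
  obtain ⟨m, hm, hmax⟩ := Set.exists_max_image _ id hfin ⟨0, by simp⟩
  obtain ⟨k, hmk, hk⟩ := exists_lt_two_mul_pentagonal_add_notMem m m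
  have key := sum_antidiagonal_card_two_mul_mul_coeff_pentagonalSeries (pentagonal k + m)
  rw [coeff_pentagonalSeries_eq_zero _ hk, sum_eq_single (m, pentagonal k)] at key
  · rw [coeff_pentagonalSeries_zmod_two_pentagonal, mul_one, ZMod.natCast_eq_zero_iff_even,
      Nat.even_iff] at key
    exact absurd hm (by simp [key])
  · rintro ⟨a, j⟩ hx hne
    simp only [HasAntidiagonal.mem_antidiagonal] at hx ⊢
    rcases lt_or_ge m a with hma | hma
    · have : ¬ Fintype.card (2 * a).Partition % 2 = 1 := fun h ↦ (hmax a h).not_gt hma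
      rw [ZMod.natCast_eq_zero_iff_even.2 (Nat.even_iff.2 (by omega)), zero_mul]
    · have hne' : a ≠ m := fun h ↦ hne (by ext <;> simp <;> omega)
      have hgap := natCast_pentagonal_neg k
      rw [coeff_pentagonalSeries_eq_zero _ (notMem_range_pentagonal_of_lt_of_lt (k := k)
        (by omega) (by omega)), mul_zero]
  · exact fun h ↦ absurd (HasAntidiagonal.mem_antidiagonal.2 (add_comm _ _)) h

theorem Nat.Partition.infinite_setOf_card_two_mul_mod_two_eq_zero :
    {n : ℕ | Fintype.card (Nat.Partition (2 * n)) % 2 = 0}.Infinite := by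
  intro hfin
  obtain ⟨N, hN⟩ := hfin.bddAbove
  have hodd : ∀ m, N < m → (Fintype.card (2 * m).Partition : ZMod 2) = 1 := fun m hm ↦
    ZMod.natCast_eq_one_iff_odd.2 <| Nat.odd_iff.2 <| by
      have : ¬ Fintype.card (2 * m).Partition % 2 = 0 := fun h ↦ (hN h).not_gt hm
      omega
  -- `K = N + 12` makes the gap after `pentagonal (-K)` longer than `N + 2`, and `2 n ≥ 24`.
  have hgap := natCast_pentagonal_add_one (N + 12 : ℕ)
  have hlarge := natCast_pentagonal_neg (N + 12 : ℕ)
  push_cast at hgap hlarge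
  obtain ⟨a, ha⟩ := two_mul_mem_range_pentagonal_of_forall_lt (K := N + 12)
    (n := pentagonal (-(N + 12 : ℕ)) + N + 1) hodd (by omega) (by push_cast; omega)
  obtain ⟨b, hb⟩ := two_mul_mem_range_pentagonal_of_forall_lt (K := N + 12)
    (n := pentagonal (-(N + 12 : ℕ)) + N + 2) hodd (by omega) (by push_cast; omega)
  have hsmall := pentagonal_lt_of_pentagonal_add_two_eq (a := a) (b := b) (by omega)
  push_cast at ha hb
  omega

/-- `p(2n)` takes each value of parity infinitely often. -/
theorem stmt13 :
    {n : ℕ | Fintype.card (Nat.Partition (2 * n)) % 2 = 0}.Infinite ∧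
    {n : ℕ | Fintype.card (Nat.Partition (2 * n)) % 2 = 1}.Infinite :=
  ⟨Nat.Partition.infinite_setOf_card_two_mul_mod_two_eq_zero,
    Nat.Partition.infinite_setOf_card_two_mul_mod_two_eq_one⟩
end

section
/- The partition function p(n) takes each value of parity infinitely often. -/
/-!
By Euler's pentagonal number theorem, `∑ p(n) Xⁿ` is the inverse of `∑ ± X^g`, the sum running
over the generalized pentagonal numbers `g`, so `∑_g ± p(n - g) = 0` for every `n ≥ 1`.
The gaps between pentagonal numbers grow: none lies strictly between `g - k` and
`g = k(3k+1)/2`. If `p(m)` were constant modulo 2 from `m = N` on, take `k = N + 1`: the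
recurrences at `g - 1` and at `g` then agree term by term, except for the extra term
`± p(0) = ± 1` at `g`, which is absurd.
-/

open Filter Finset PowerSeries
open scoped PowerSeries.WithPiTopology

theorem pentagonal_add_le_pentagonal_neg_of_lt {t : ℤ} {k : ℕ}
    (h : pentagonal t < pentagonal (-k)) : pentagonal t + k ≤ pentagonal (-k) := by
  have ht := two_mul_natCast_pentagonal t
  have hk := two_mul_natCast_pentagonal_neg (k : ℤ)
  zify at h ⊢
  rcases le_or_gt 0 t with h0 | h0
  · have : t ≤ k := by nlinarith
    nlinarith
  · have : -t < k := by nlinarith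
    nlinarith

namespace Nat.Partition

variable {R : Type*} [CommRing R]

variable (R) in
theorem powerSeriesMk_card_mul_pentagonalSeries_s15 :
    PowerSeries.mk (fun n ↦ (Fintype.card n.Partition : R)) * pentagonalSeries R = 1 := by
  let : TopologicalSpace R := ⊥
  have : DiscreteTopology R := ⟨rfl⟩
  have geom (i : ℕ) : (∑' j, X ^ ((i + 1) * j) : R⟦X⟧) * (1 - X ^ (i + 1)) = 1 := by
    simp_rw [pow_mul]
    exact WithPiTopology.tsum_pow_mul_one_sub_of_constantCoeff_eq_zero (by simp)
  have hP := hasProd_powerSeriesMk_card_restricted R (fun _ ↦ True)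
  simp only [if_true, restricted, implies_true, filter_true] at hP
  have hprod := hP.mul (WithPiTopology.hasProd_one_sub_X_pow R)
  simp only [geom] at hprod
  exact hprod.unique hasProd_one

theorem sum_range_coeff_pentagonalSeries_mul_card {n : ℕ} (hn : n ≠ 0) :
    ∑ j ∈ range (n + 1), (pentagonalSeries R).coeff j * Fintype.card (n - j).Partition = 0 := by
  have h := congrArg (coeff n) (powerSeriesMk_card_mul_pentagonalSeries_s15 R)
  rw [mul_comm, coeff_mul, Finset.Nat.sum_antidiagonal_eq_sum_range_succ_mk] at h
  simpa [coeff_one, hn] using h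

theorem frequently_card_ne [Nontrivial R] (r : R) :
    ∃ᶠ n in atTop, (Fintype.card (Nat.Partition n) : R) ≠ r := by
  rw [frequently_atTop]
  intro N
  by_contra! hr
  have hG : N + 2 ≤ pentagonal (-(N + 1 : ℕ)) := by
    have := two_mul_natCast_pentagonal_neg ((N + 1 : ℕ) : ℤ)
    zify
    push_cast at this ⊢
    nlinarith
  set G := pentagonal (-(N + 1 : ℕ))
  have hsum (n : ℕ) (hn : G ≤ n + 1) :
      ∑ j ∈ range G, (pentagonalSeries R).coeff j * Fintype.card (n - j).Partition =
        r * ∑ j ∈ range G, (pentagonalSeries R).coeff j := by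
    rw [mul_sum]
    refine sum_congr rfl fun j hj ↦ ?_
    by_cases hj' : j ∈ Set.range pentagonal
    · obtain ⟨t, rfl⟩ := hj'
      have := pentagonal_add_le_pentagonal_neg_of_lt (mem_range.1 hj)
      rw [hr _ (by omega), mul_comm]
    · rw [coeff_pentagonalSeries_eq_zero R hj', zero_mul, mul_zero]
  have hG₁ := sum_range_coeff_pentagonalSeries_mul_card (R := R) (n := G - 1) (by omega)
  have hG₀ := sum_range_coeff_pentagonalSeries_mul_card (R := R) (n := G) (by omega)
  rw [Nat.sub_add_cancel (by omega), hsum _ (by omega)] at hG₁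
  rw [sum_range_succ, hsum _ (by omega), hG₁, zero_add, Nat.sub_self, Fintype.card_unique,
    Nat.cast_one, mul_one, coeff_pentagonalSeries_eq_zero_iff] at hG₀
  exact hG₀ ⟨_, rfl⟩

end Nat.Partition

/-- The partition function `p(n)` takes each value of parity infinitely often. -/
theorem stmt15 :
    {n : ℕ | Fintype.card (Nat.Partition n) % 2 = 0}.Infinite ∧
    {n : ℕ | Fintype.card (Nat.Partition n) % 2 = 1}.Infinite := by
  have h (r : ZMod 2) : {n : ℕ | (Fintype.card n.Partition : ZMod 2) ≠ r}.Infinite :=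
    Nat.frequently_atTop_iff_infinite.1 (Nat.Partition.frequently_card_ne r)
  refine ⟨(h 1).mono fun n (hn : _ ≠ 1) ↦ ?_, (h 0).mono fun n (hn : _ ≠ 0) ↦ ?_⟩
  · rwa [Ne, ZMod.natCast_eq_one_iff_odd, Nat.not_odd_iff_even, Nat.even_iff] at hn
  · rwa [Ne, ZMod.natCast_eq_zero_iff_even, Nat.not_even_iff_odd, Nat.odd_iff] at hn
end
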